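/- Let H be a linear 3-uniform hypergraph on n vertices that is the union of k pairwise edge-disjoint matchings M₁,…,M_k, each of size at least γn, where γk ≥ 1. Define the signature graph G with vertex set the ordered pairs (u,v) of distinct vertices of H, and an edge between (u₁,v₁) and (u₂,v₂) whenever {u₁,v₁} ∩ {u₂,v₂} = ∅ and there exists w with {u₁,u₂,w} ∈ E(H) and {v₁,v₂,w} ∈ E(H). Then G has at least 12γ²nk² edges. -/

import Mathlib

open Finset

lemma card3_ne {V : Type*} [DecidableEq V] {a b c : V}
    (h : ({a, b, c} : Finset V).card = 3) : a ≠ b ∧ a ≠ c ∧ b ≠ c := by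
  refine ⟨?_, ?_, ?_⟩ <;> rintro rfl <;> simp at h
  · have h2 : ({a, c} : Finset V).card ≤ 2 := (Finset.card_insert_le _ _).trans (by simp)
    omega
  · have h2 : ({b, a} : Finset V).card ≤ 2 := (Finset.card_insert_le _ _).trans (by simp)
    omega
  · have h2 : ({a, b} : Finset V).card ≤ 2 := (Finset.card_insert_le _ _).trans (by simp)
    omega

lemma pair_eq_of_triple_eq {V : Type*} [DecidableEq V] {a₁ a₂ b₁ b₂ w : V}
    (hca : ({a₁, a₂, w} : Finset V).card = 3) (hcb : ({b₁, b₂, w} : Finset V).card = 3)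
    (h : ({b₁, b₂, w} : Finset V) = {a₁, a₂, w}) :
    (b₁ = a₁ ∧ b₂ = a₂) ∨ (b₁ = a₂ ∧ b₂ = a₁) := by
  obtain ⟨ha12, ha1w, ha2w⟩ := card3_ne hca
  obtain ⟨hb12, hb1w, hb2w⟩ := card3_ne hcb
  have h1 : b₁ ∈ ({a₁, a₂, w} : Finset V) := h ▸ (by simp)
  have h2 : b₂ ∈ ({a₁, a₂, w} : Finset V) := h ▸ (by simp)
  simp only [Finset.mem_insert, Finset.mem_singleton] at h1 h2
  rcases h1 with rfl | rfl | rfl <;> rcases h2 with h2 | h2 | h2 <;> simp_all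

lemma triple_count {V : Type*} [Fintype V] [DecidableEq V] {e : Finset V} (he : e.card = 3) :
    ((Finset.univ : Finset (V × V × V)).filter
      (fun t => ({t.2.1, t.2.2, t.1} : Finset V) = e)).card = 6 := by
  obtain ⟨x, y, z, hxy, hxz, hyz, rfl⟩ := Finset.card_eq_three.mp he
  have : (Finset.univ : Finset (V × V × V)).filter
      (fun t => ({t.2.1, t.2.2, t.1} : Finset V) = {x, y, z}) =
      {(z,(x,y)), (z,(y,x)), (y,(x,z)), (y,(z,x)), (x,(y,z)), (x,(z,y))} := by
    ext ⟨w, u₁, u₂⟩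
    simp only [Finset.mem_filter, Finset.mem_univ, true_and, Finset.mem_insert,
      Finset.mem_singleton, Prod.mk.injEq]
    constructor
    · intro h
      have hc : ({u₁, u₂, w} : Finset V).card = 3 := by rw [h, he]
      obtain ⟨h12, h1w, h2w⟩ := card3_ne hc
      have m1 : u₁ ∈ ({x, y, z} : Finset V) := h ▸ (by simp)
      have m2 : u₂ ∈ ({x, y, z} : Finset V) := h ▸ (by simp)
      have mw : w ∈ ({x, y, z} : Finset V) := h ▸ (by simp)
      simp only [Finset.mem_insert, Finset.mem_singleton] at m1 m2 mw
      rcases m1 with rfl | rfl | rfl <;> rcases m2 with h2 | h2 | h2 <;>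
        rcases mw with hw | hw | hw <;> simp_all
    · rintro (⟨rfl, rfl, rfl⟩ | ⟨rfl, rfl, rfl⟩ | ⟨rfl, rfl, rfl⟩ | ⟨rfl, rfl, rfl⟩ |
        ⟨rfl, rfl, rfl⟩ | ⟨rfl, rfl, rfl⟩) <;>
      · ext a; simp; try tauto
  rw [this]
  simp [Finset.card_insert_of_notMem, hxy, hxz, hyz, hxy.symm, hxz.symm, hyz.symm, Prod.ext_iff]

set_option maxHeartbeats 2000000 in
/-- Let `H` be a linear 3-uniform hypergraph on `n` vertices which is the union
of `k` pairwise edge-disjoint matchings `M i`, each of size at least `γn`, with `γk ≥ 1`.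
Then the signature graph `G` (on ordered pairs of distinct vertices, with adjacency given by
cherries) has at least `12γ²nk²` edges. -/
theorem signature_graph_edge_bound
    {V : Type*} [Fintype V] [DecidableEq V] (n k : ℕ) (hn : Fintype.card V = n)
    (γ : ℝ) (hγ : 0 < γ) (hγk : γ * k ≥ 1)
    (M : Fin k → Finset (Finset V)) (E : Finset (Finset V))
    (hE : E = Finset.univ.biUnion (fun i => M i))
    (hcard : ∀ i, ∀ e ∈ M i, e.card = 3)
    (hmatching : ∀ i, ∀ e ∈ M i, ∀ e' ∈ M i, e ≠ e' → Disjoint e e')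
    (hdisj : ∀ i j : Fin k, i ≠ j → Disjoint (M i) (M j))
    (hsize : ∀ i, ((M i).card : ℝ) ≥ γ * n)
    (hlinear : ∀ e ∈ E, ∀ e' ∈ E, e ≠ e' → (e ∩ e').card ≤ 1)
    (G : SimpleGraph (V × V))
    (hG : ∀ p q : V × V, G.Adj p q ↔
      (({p.1, p.2} : Set V) ∩ {q.1, q.2} = ∅ ∧
        ∃ w : V, ({p.1, q.1, w} : Finset V) ∈ E ∧ ({p.2, q.2, w} : Finset V) ∈ E)) :
    (G.edgeSet.ncard : ℝ) ≥ 12 * γ ^ 2 * n * k ^ 2 := by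
  classical
  rcases Nat.eq_zero_or_pos n with hn0 | hnpos
  · subst hn0
    simp only [Nat.cast_zero, mul_zero, zero_mul]
    positivity
  have hn1 : (1 : ℝ) ≤ (n : ℝ) := by exact_mod_cast hnpos
  have hcard' : ∀ e ∈ E, e.card = 3 := by
    intro e he
    rw [hE, Finset.mem_biUnion] at he
    obtain ⟨i, _, hi⟩ := he
    exact hcard i e hi
  -- the unique intersection point of two distinct hyperedges
  have hint : ∀ e ∈ E, ∀ f ∈ E, e ≠ f → ∀ w, w ∈ e → w ∈ f → ∀ x, x ∈ e → x ∈ f → x = w := by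
    intro e he f hf hef w hwe hwf x hxe hxf
    have h1 := hlinear e he f hf hef
    exact Finset.card_le_one.mp h1 x (Finset.mem_inter.mpr ⟨hxe, hxf⟩)
      w (Finset.mem_inter.mpr ⟨hwe, hwf⟩)
  set m := E.card with hm_def
  -- lower bound on m
  have hmR : γ * n * k ≤ (m : ℝ) := by
    have hcb : m = ∑ i, (M i).card := by
      rw [hm_def, hE]
      exact Finset.card_biUnion (fun i _ j _ hij => hdisj i j hij)
    have : (↑(∑ i, (M i).card) : ℝ) = ∑ i : Fin k, ((M i).card : ℝ) := by push_cast; ring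
    rw [hcb, this]
    calc γ * n * k = ∑ _i : Fin k, γ * n := by
          simp [Finset.sum_const]; ring
      _ ≤ ∑ i : Fin k, ((M i).card : ℝ) := Finset.sum_le_sum (fun i _ => hsize i)
  -- counting structures
  set pw : V → ℕ := fun w =>
    ((Finset.univ : Finset (V × V)).filter
      (fun a => ({a.1, a.2, w} : Finset V) ∈ E)).card with hpw_def
  set P : Finset (V × V × V) :=
    Finset.univ.filter (fun t => ({t.2.1, t.2.2, t.1} : Finset V) ∈ E) with hP_def
  have hPsum : P.card = ∑ w : V, pw w := by
    rw [Finset.card_eq_sum_card_fiberwise (f := Prod.fst) (t := Finset.univ)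
      (fun t _ => Finset.mem_univ _)]
    refine Finset.sum_congr rfl (fun w _ => ?_)
    refine Finset.card_nbij' (fun t => t.2) (fun a => (w, a)) ?_ ?_ ?_ ?_
    · rintro ⟨w', u₁, u₂⟩ ht
      simp only [hP_def, Finset.mem_coe, Finset.mem_filter, Finset.mem_univ, true_and] at ht ⊢
      obtain ⟨h1, rfl⟩ := ht
      exact h1
    · rintro ⟨u₁, u₂⟩ ha
      simp only [hP_def, Finset.mem_coe, Finset.mem_filter, Finset.mem_univ, true_and, and_true] at ha ⊢
      exact ha
    · rintro ⟨w', u⟩ ht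
      simp only [Finset.mem_coe, Finset.mem_filter] at ht
      simp [ht.2]
    · rintro ⟨u₁, u₂⟩ _
      rfl
  have hP6 : P.card = 6 * m := by
    have h := Finset.card_eq_sum_card_fiberwise
      (f := fun t : V × V × V => ({t.2.1, t.2.2, t.1} : Finset V)) (t := E) (s := P)
      (fun t ht => (Finset.mem_filter.mp ht).2)
    have h2 : ∀ e ∈ E, (P.filter
        (fun t => ({t.2.1, t.2.2, t.1} : Finset V) = e)).card = 6 := by
      intro e he
      have hfil : P.filter (fun t => ({t.2.1, t.2.2, t.1} : Finset V) = e) =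
          Finset.univ.filter
            (fun t : V × V × V => ({t.2.1, t.2.2, t.1} : Finset V) = e) := by
        ext t
        simp only [hP_def, Finset.filter_filter, Finset.mem_filter, Finset.mem_univ,
          true_and]
        exact ⟨fun h => h.2, fun h => ⟨h ▸ he, h⟩⟩
      rw [hfil, triple_count (hcard' e he)]
    rw [h, Finset.sum_congr rfl h2, Finset.sum_const, smul_eq_mul, mul_comm]
  -- the tuple set T
  set T : Finset (V × ((V × V) × (V × V))) :=
    Finset.univ.filter (fun t =>
      ({t.2.1.1, t.2.1.2, t.1} : Finset V) ∈ E ∧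
      ({t.2.2.1, t.2.2.2, t.1} : Finset V) ∈ E ∧
      ({t.2.1.1, t.2.1.2, t.1} : Finset V) ≠ ({t.2.2.1, t.2.2.2, t.1} : Finset V)) with hT_def
  -- per-vertex bound
  have hkey : ∀ w : V, pw w * pw w ≤ (T.filter (fun t => t.1 = w)).card + 2 * pw w := by
    intro w
    set Pw : Finset (V × V) := (Finset.univ : Finset (V × V)).filter
      (fun a => ({a.1, a.2, w} : Finset V) ∈ E) with hPw_def
    set S : Finset ((V × V) × (V × V)) := Pw ×ˢ Pw with hS_def
    have hsplit := Finset.card_filter_add_card_filter_not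
      (s := S) (p := fun ab => ({ab.1.1, ab.1.2, w} : Finset V) = ({ab.2.1, ab.2.2, w} : Finset V))
    have hScard : S.card = pw w * pw w := by
      rw [hS_def, Finset.card_product]
    have hbad : (S.filter (fun ab =>
        ({ab.1.1, ab.1.2, w} : Finset V) = ({ab.2.1, ab.2.2, w} : Finset V))).card
        ≤ 2 * pw w := by
      have hsub : S.filter (fun ab =>
          ({ab.1.1, ab.1.2, w} : Finset V) = ({ab.2.1, ab.2.2, w} : Finset V)) ⊆
          Pw.biUnion (fun a => ({(a, a), (a, (a.2, a.1))} : Finset ((V × V) × (V × V)))) := by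
        rintro ⟨⟨a₁, a₂⟩, ⟨b₁, b₂⟩⟩ hab
        simp only [hS_def, Finset.mem_filter, Finset.mem_product] at hab
        obtain ⟨⟨ha, hb⟩, heq⟩ := hab
        simp only [hPw_def, Finset.mem_filter, Finset.mem_univ, true_and] at ha hb
        have hca := hcard' _ ha
        have hcb := hcard' _ hb
        have := pair_eq_of_triple_eq hca hcb heq.symm
        rw [Finset.mem_biUnion]
        refine ⟨(a₁, a₂), by simp [hPw_def, ha], ?_⟩
        rcases this with ⟨rfl, rfl⟩ | ⟨rfl, rfl⟩ <;> simp
      calc _ ≤ (Pw.biUnion (fun a =>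
            ({(a, a), (a, (a.2, a.1))} : Finset ((V × V) × (V × V))))).card :=
            Finset.card_le_card hsub
        _ ≤ ∑ a ∈ Pw, ({(a, a), (a, (a.2, a.1))} : Finset ((V × V) × (V × V))).card :=
            Finset.card_biUnion_le
        _ ≤ ∑ _a ∈ Pw, 2 := Finset.sum_le_sum (fun a _ =>
            (Finset.card_insert_le _ _).trans (by simp))
        _ = 2 * pw w := by rw [Finset.sum_const, smul_eq_mul, mul_comm]
    have hgood : (S.filter (fun ab =>
        ¬ ({ab.1.1, ab.1.2, w} : Finset V) = ({ab.2.1, ab.2.2, w} : Finset V))).card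
        = (T.filter (fun t => t.1 = w)).card := by
      refine Finset.card_nbij' (fun ab => (w, ab)) (fun t => t.2) ?_ ?_ ?_ ?_
      · rintro ⟨⟨a₁, a₂⟩, ⟨b₁, b₂⟩⟩ hab
        simp only [hS_def, hPw_def, Finset.mem_coe, Finset.mem_filter, Finset.mem_product, Finset.mem_univ,
          true_and] at hab
        obtain ⟨⟨ha, hb⟩, hne⟩ := hab
        simp only [hT_def, Finset.mem_coe, Finset.mem_filter, Finset.mem_univ, true_and, and_true]
        exact ⟨ha, hb, hne⟩
      · rintro ⟨w', ⟨⟨a₁, a₂⟩, ⟨b₁, b₂⟩⟩⟩ ht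
        simp only [hT_def, Finset.mem_coe, Finset.mem_filter, Finset.mem_univ, true_and] at ht
        obtain ⟨⟨ha, hb, hne⟩, rfl⟩ := ht
        simp only [hS_def, hPw_def, Finset.mem_coe, Finset.mem_filter, Finset.mem_product, Finset.mem_univ,
          true_and]
        exact ⟨⟨ha, hb⟩, hne⟩
      · intro ab _; rfl
      · rintro ⟨w', ab⟩ ht
        simp only [Finset.mem_coe, Finset.mem_filter] at ht
        simp [ht.2]
    omega
  have hTsum : T.card = ∑ w : V, (T.filter (fun t => t.1 = w)).card :=
    Finset.card_eq_sum_card_fiberwise (f := Prod.fst) (t := Finset.univ)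
      (fun t _ => Finset.mem_univ _)
  have hQ : ∑ w : V, pw w * pw w ≤ T.card + 2 * (6 * m) := by
    calc ∑ w : V, pw w * pw w
        ≤ ∑ w : V, ((T.filter (fun t => t.1 = w)).card + 2 * pw w) :=
          Finset.sum_le_sum (fun w _ => hkey w)
      _ = T.card + 2 * (6 * m) := by
          rw [Finset.sum_add_distrib, ← hTsum, ← Finset.mul_sum, ← hPsum, hP6]
  -- T injects into ordered adjacent pairs D
  set D : Finset ((V × V) × (V × V)) :=
    Finset.univ.filter (fun z => G.Adj z.1 z.2) with hD_def
  have hTD : T.card ≤ D.card := by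
    refine Finset.card_le_card_of_injOn
      (fun t => ((t.2.1.1, t.2.2.1), (t.2.1.2, t.2.2.2))) ?_ ?_
    · rintro ⟨w, ⟨⟨u₁, u₂⟩, ⟨v₁, v₂⟩⟩⟩ ht
      simp only [hT_def, Finset.mem_coe, Finset.mem_filter, Finset.mem_univ, true_and] at ht
      obtain ⟨he, hf, hef⟩ := ht
      obtain ⟨hu12, hu1w, hu2w⟩ := card3_ne (hcard' _ he)
      obtain ⟨hv12, hv1w, hv2w⟩ := card3_ne (hcard' _ hf)
      have hx := hint _ he _ hf hef w (by simp) (by simp)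
      have hu1v1 : u₁ ≠ v₁ := fun h => hu1w (hx u₁ (by simp) (by simp [h]))
      have hu1v2 : u₁ ≠ v₂ := fun h => hu1w (hx u₁ (by simp) (by simp [h]))
      have hu2v1 : u₂ ≠ v₁ := fun h => hu2w (hx u₂ (by simp) (by simp [h]))
      have hu2v2 : u₂ ≠ v₂ := fun h => hu2w (hx u₂ (by simp) (by simp [h]))
      simp only [hD_def, Finset.mem_coe, Finset.mem_filter, Finset.mem_univ, true_and]
      rw [hG]
      refine ⟨?_, w, he, hf⟩
      ext x
      simp only [Set.mem_inter_iff, Set.mem_insert_iff, Set.mem_singleton_iff,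
        Set.mem_empty_iff_false, iff_false, not_and, not_or]
      rintro (rfl | rfl) <;> exact ⟨by tauto, by tauto⟩
    · rintro ⟨w, ⟨⟨u₁, u₂⟩, ⟨v₁, v₂⟩⟩⟩ ht ⟨w', ⟨⟨u₁', u₂'⟩, ⟨v₁', v₂'⟩⟩⟩ ht' heq
      simp only [Finset.coe_filter, Set.mem_setOf_eq, hT_def, Finset.mem_univ,
        true_and] at ht ht'
      obtain ⟨he, hf, hef⟩ := ht
      obtain ⟨he', hf', hef'⟩ := ht'
      simp only [Prod.mk.injEq] at heq
      obtain ⟨⟨rfl, rfl⟩, rfl, rfl⟩ := heq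
      obtain ⟨hu12, hu1w, hu2w⟩ := card3_ne (hcard' _ he)
      obtain ⟨_, hu1w', hu2w'⟩ := card3_ne (hcard' _ he')
      have hww : w = w' := by
        by_cases hee : ({u₁, u₂, w} : Finset V) = ({u₁, u₂, w'} : Finset V)
        · have : w ∈ ({u₁, u₂, w'} : Finset V) := hee ▸ (by simp)
          simp only [Finset.mem_insert, Finset.mem_singleton] at this
          rcases this with h | h | h
          · exact absurd h (Ne.symm hu1w)
          · exact absurd h (Ne.symm hu2w)
          · exact h
        · have h1 := hlinear _ he _ he' hee
          have : u₁ = u₂ := Finset.card_le_one.mp h1 u₁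
            (Finset.mem_inter.mpr ⟨by simp, by simp⟩) u₂
            (Finset.mem_inter.mpr ⟨by simp, by simp⟩)
          exact absurd this hu12
      rw [hww]
  -- D is at most twice the number of edges
  have hfin : G.edgeSet.Finite := Set.toFinite _
  set EF : Finset (Sym2 (V × V)) := hfin.toFinset with hEF_def
  have hD2 : D.card ≤ 2 * EF.card := by
    refine Finset.card_le_mul_card_image_of_maps_to
      (f := fun z => s(z.1, z.2)) (t := EF) ?_ 2 ?_
    · intro z hz
      simp only [hD_def, Finset.mem_filter, Finset.mem_univ, true_and] at hz
      simp only [hEF_def, Set.Finite.mem_toFinset, SimpleGraph.mem_edgeSet]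
      exact hz
    · intro b _
      induction b using Sym2.ind with
      | _ x y =>
        have hsub : D.filter (fun z => s(z.1, z.2) = s(x, y)) ⊆
            ({(x, y), (y, x)} : Finset ((V × V) × (V × V))) := by
          intro z hz
          simp only [Finset.mem_filter, Sym2.eq_iff] at hz
          rcases hz.2 with ⟨h1, h2⟩ | ⟨h1, h2⟩ <;>
            simp [Finset.mem_insert, ← h1, ← h2, Prod.ext_iff]
        exact (Finset.card_le_card hsub).trans ((Finset.card_insert_le _ _).trans (by simp))
  have hEFcard : G.edgeSet.ncard = EF.card := Set.ncard_eq_toFinset_card _ hfin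
  -- Chebyshev / Cauchy-Schwarz
  have hcheb : ((6 * m : ℕ) : ℝ) ^ 2 ≤ (n : ℝ) * ∑ w : V, (pw w : ℝ) ^ 2 := by
    have h1 := sq_sum_le_card_mul_sum_sq (s := (Finset.univ : Finset V))
      (f := fun w => (pw w : ℝ))
    have h2 : ∑ w : V, (pw w : ℝ) = ((6 * m : ℕ) : ℝ) := by
      rw [← hP6, hPsum]; push_cast; rfl
    rw [h2] at h1
    simpa [Finset.card_univ, hn] using h1
  have hQR : ∑ w : V, (pw w : ℝ) ^ 2 ≤ (T.card : ℝ) + 12 * m := by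
    have : ((∑ w : V, pw w * pw w : ℕ) : ℝ) ≤ ((T.card + 2 * (6 * m) : ℕ) : ℝ) := by
      exact_mod_cast hQ
    push_cast at this
    calc ∑ w : V, (pw w : ℝ) ^ 2 = ∑ w : V, (pw w : ℝ) * (pw w : ℝ) := by
          refine Finset.sum_congr rfl (fun w _ => by ring)
      _ ≤ (T.card : ℝ) + 12 * m := by linarith
  -- final arithmetic
  rw [hEFcard]
  have hTDr : (T.card : ℝ) ≤ (D.card : ℝ) := by exact_mod_cast hTD
  have hD2r : (D.card : ℝ) ≤ 2 * EF.card := by exact_mod_cast hD2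
  have hmn : (n : ℝ) ≤ (m : ℝ) := by
    have h1 : (n : ℝ) * 1 ≤ (n : ℝ) * (γ * k) :=
      mul_le_mul_of_nonneg_left hγk (by positivity)
    nlinarith [hmR, h1]
  have hmpos : (0 : ℝ) ≤ (m : ℝ) := Nat.cast_nonneg _
  have h36 : 36 * (m : ℝ) ^ 2 ≤ (n : ℝ) * ((T.card : ℝ) + 12 * m) := by
    push_cast at hcheb
    nlinarith [hcheb, hQR, hn1]
  have h24 : 24 * (m : ℝ) ^ 2 ≤ (n : ℝ) * (2 * EF.card) := by
    nlinarith [h36, hmn, hn1, hTDr, hD2r]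
  have hsq : (γ * n * k) ^ 2 ≤ (m : ℝ) ^ 2 :=
    pow_le_pow_left₀ (by positivity) hmR 2
  have hmγ : 12 * (m : ℝ) ^ 2 ≥ 12 * γ ^ 2 * n ^ 2 * k ^ 2 := by nlinarith [hsq]
  have hk0 : (0 : ℝ) ≤ (k : ℝ) := Nat.cast_nonneg _
  nlinarith [h24, hmγ, hn1, sq_nonneg ((k : ℝ) * γ)]
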